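/- The Alexandrov topology A on Minkowski space M = ℝ⁴, generated by the chronological diamonds ⟨u,v⟩ = I⁺(u) ∩ I⁻(v) = {w : u ≪ w ≪ v} for u, v ∈ M, is not equal to the Zeeman topology Z. -/
import Mathlib


open Set Metric TopologicalSpace

noncomputable section

/-- Minkowski space `M = ℝ⁴` with the Euclidean metric/topology. -/
abbrev M4 : Type := EuclideanSpace ℝ (Fin 4)

/-- The Minkowski quadratic form `Q(x) = x₀² − x₁² − x₂² − x₃²`. -/
def Q (x : M4) : ℝ := x 0 ^ 2 - x 1 ^ 2 - x 2 ^ 2 - x 3 ^ 2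

/-- Chronological order: `x ≪ y`. -/
def chron (x y : M4) : Prop := Q (y - x) > 0 ∧ x 0 < y 0

/-- Causal order: `x ≺ y`. -/
def causal (x y : M4) : Prop := Q (y - x) ≥ 0 ∧ x 0 ≤ y 0

/-- Horismos: `x → y`. -/
def horismos (x y : M4) : Prop := Q (y - x) = 0 ∧ x ≠ y ∧ x 0 < y 0

/-- The light cone `N(x) = N⁺(x) ∪ N⁻(x)`. -/
def lightCone (x : M4) : Set M4 := {y | horismos x y} ∪ {y | horismos y x}

/-- The Zeeman topology `Z`, generated by the sets `Z_ε(x) = (B_ε(x) \ N(x)) ∪ {x}`. -/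
def Zeeman : TopologicalSpace M4 :=
  TopologicalSpace.generateFrom
    {S | ∃ (x : M4) (ε : ℝ), 0 < ε ∧ S = (Metric.ball x ε \ lightCone x) ∪ {x}}

/-- The interval topology `T_R` of a relation `R`, generated by the subbasis of
complements of the sets `R⁺(x) = {y | R x y}` and `R⁻(x) = {y | R y x}`. -/
def intervalTopology (R : M4 → M4 → Prop) : TopologicalSpace M4 :=
  TopologicalSpace.generateFrom
    ({S | ∃ x : M4, S = {y | R x y}ᶜ} ∪ {S | ∃ x : M4, S = {y | R y x}ᶜ})
/-- The Alexandrov topology, generated by the chronological diamonds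
`⟨u,v⟩ = I⁺(u) ∩ I⁻(v)`. -/
def Alexandrov : TopologicalSpace M4 :=
  TopologicalSpace.generateFrom
    {S | ∃ u v : M4, S = {w | chron u w} ∩ {w | chron w v}}

lemma contProj : Continuous fun x : M4 => x 0 :=
  (EuclideanSpace.proj (0 : Fin 4) : M4 →L[ℝ] ℝ).continuous

lemma contQ : Continuous Q := by
  unfold Q
  fun_prop

lemma euclidean_le_Alexandrov : (inferInstance : TopologicalSpace M4) ≤ Alexandrov := by
  apply le_generateFrom
  rintro S ⟨u, v, rfl⟩
  have h1 : IsOpen {w : M4 | chron u w} := by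
    have : {w : M4 | chron u w} = {w : M4 | 0 < Q (w - u)} ∩ {w : M4 | u 0 < w 0} := rfl
    rw [this]
    exact (isOpen_lt continuous_const (contQ.comp (continuous_id.sub continuous_const))).inter
      (isOpen_lt continuous_const contProj)
  have h2 : IsOpen {w : M4 | chron w v} := by
    have : {w : M4 | chron w v} = {w : M4 | 0 < Q (v - w)} ∩ {w : M4 | w 0 < v 0} := rfl
    rw [this]
    exact (isOpen_lt continuous_const (contQ.comp (continuous_const.sub continuous_id))).inter
      (isOpen_lt contProj continuous_const)
  exact h1.inter h2

/-- The Alexandrov topology is not equal to the Zeeman topology. -/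
theorem Alexandrov_ne_Zeeman : Alexandrov ≠ Zeeman := by
  intro h
  set S : Set M4 := (Metric.ball (0 : M4) 1 \ lightCone 0) ∪ {0} with hS
  have hZ : Zeeman.IsOpen S := TopologicalSpace.GenerateOpen.basic _ ⟨0, 1, one_pos, rfl⟩
  have hA : Alexandrov.IsOpen S := by rw [h]; exact hZ
  have hE : IsOpen S := euclidean_le_Alexandrov S hA
  have h0 : (0 : M4) ∈ S := Or.inr rfl
  rcases Metric.isOpen_iff.mp hE 0 h0 with ⟨δ, hδ, hball⟩
  -- the light cone point y = (δ/2, δ/2, 0, 0)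
  set t : ℝ := δ / 2 with ht
  have htpos : 0 < t := by positivity
  set y : M4 := (WithLp.equiv 2 (Fin 4 → ℝ)).symm ![t, t, 0, 0] with hy
  have hyi : ∀ i, y i = ![t, t, 0, 0] i := fun i => rfl
  have hy0 : y 0 = t := rfl
  have hy1 : y 1 = t := rfl
  have hy2 : y 2 = 0 := rfl
  have hy3 : y 3 = 0 := rfl
  have hyne : y ≠ 0 := by
    intro hcon
    have : y 0 = (0 : M4) 0 := by rw [hcon]
    rw [hy0] at this
    simp at this
    exact absurd this (ne_of_gt htpos)
  have hQy : Q (y - 0) = 0 := by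
    simp only [sub_zero, Q, hy0, hy1, hy2, hy3]
    ring
  have hlc : y ∈ lightCone 0 := by
    left
    refine ⟨hQy, fun hcon => hyne hcon.symm, ?_⟩
    rw [hy0]
    simpa using htpos
  have hmem : y ∈ Metric.ball (0 : M4) δ := by
    rw [Metric.mem_ball, dist_zero_right, EuclideanSpace.norm_eq]
    have hsum : ∑ i : Fin 4, ‖y i‖ ^ 2 = 2 * t ^ 2 := by
      rw [Fin.sum_univ_four, hy0, hy1, hy2, hy3]
      simp [Real.norm_eq_abs, sq_abs]
      ring
    rw [hsum]
    have h2t : 2 * t ^ 2 < δ ^ 2 := by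
      rw [ht]; nlinarith
    calc Real.sqrt (2 * t ^ 2) < Real.sqrt (δ ^ 2) :=
          Real.sqrt_lt_sqrt (by positivity) h2t
      _ = δ := Real.sqrt_sq hδ.le
  have := hball hmem
  rcases this with h1 | h2
  · exact h1.2 hlc
  · exact hyne h2
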